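/- arXiv:2305.06632 — 2 statements merged into one kernel-verified Lean document; each statement's English description precedes it below -/
import Mathlib

section
/- Consider the linear circulant ODE ż_i = -z_i + ∑_{j=0}^{N-1} w_j z_{i+j mod N} in ℝ^2 with nonnegative weights w_j ≥ 0 summing to 1. If the initial configuration satisfies ‖z_i(0) - z_j(0)‖ ≤ C for all communicating pairs (those with w_{(j-i) mod N} ≠ 0), then ‖z_i(t) - z_j(t)‖ ≤ C for all t ≥ 0 and all communicating pairs. -/
theorem stmt_13 (N : ℕ) (hN : 1 ≤ N) (C : ℝ) (hC : 0 < C)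
    (w : Fin N → ℝ) (hw : ∀ j, 0 ≤ w j) (hsum : ∑ j, w j = 1)
    (z : Fin N → ℝ → EuclideanSpace ℝ (Fin 2))
    (hode : ∀ i t, HasDerivAt (z i) (-(z i t) + ∑ j : Fin N, w j • z (i + j) t) t)
    (hinit : ∀ i j : Fin N, w (j - i) ≠ 0 → ‖z i 0 - z j 0‖ ≤ C) :
    ∀ t ≥ (0 : ℝ), ∀ i j : Fin N, w (j - i) ≠ 0 → ‖z i t - z j t‖ ≤ C := by
  classical
  haveI : NeZero N := ⟨by omega⟩
  intro t ht i j hij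

  set ι := {p : Fin N × Fin N // w (p.2 - p.1) ≠ 0} with hι
  -- shift of a communicating pair is communicating
  have hshift : ∀ (p : ι) (k : Fin N), w ((p.1.2 + k) - (p.1.1 + k)) ≠ 0 := by
    intro p k
    simpa [add_sub_add_right_eq_sub] using p.2
  set σ : ι → Fin N → ι := fun p k => ⟨(p.1.1 + k, p.1.2 + k), hshift p k⟩ with hσ
  set g : ℝ → (ι → EuclideanSpace ℝ (Fin 2)) := fun s p => Real.exp s • (z p.1.1 s - z p.1.2 s) with hg
  set g' : ℝ → (ι → EuclideanSpace ℝ (Fin 2)) := fun s p =>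
    Real.exp s • (∑ k : Fin N, w k • (z (p.1.1 + k) s - z (p.1.2 + k) s)) with hg'
  have hderiv : ∀ s, HasDerivAt g (g' s) s := by
    intro s
    rw [hasDerivAt_pi]
    intro p
    have h1 : HasDerivAt (fun u => z p.1.1 u - z p.1.2 u)
        ((-(z p.1.1 s) + ∑ k : Fin N, w k • z (p.1.1 + k) s)
          - (-(z p.1.2 s) + ∑ k : Fin N, w k • z (p.1.2 + k) s)) s :=
      (hode p.1.1 s).sub (hode p.1.2 s)
    have h2 := (Real.hasDerivAt_exp s).smul h1
    convert h2 using 1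
    · rfl
    have hsub : (∑ k : Fin N, w k • (z (p.1.1 + k) s - z (p.1.2 + k) s))
        = (∑ k : Fin N, w k • z (p.1.1 + k) s) - ∑ k : Fin N, w k • z (p.1.2 + k) s := by
      rw [← Finset.sum_sub_distrib]
      exact Finset.sum_congr rfl fun k _ => smul_sub _ _ _
    simp only [hg', hsub]
    module
  have hgcont : ContinuousOn g (Set.Icc 0 t) :=
    (continuous_iff_continuousAt.2 fun s => (hderiv s).continuousAt).continuousOn
  have hbound : ∀ s ∈ Set.Ico (0:ℝ) t, ‖g' s‖ ≤ 1 * ‖g s‖ + 0 := by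
    intro s _
    rw [one_mul, add_zero]
    have hnn : (0:ℝ) ≤ ‖g s‖ := norm_nonneg _
    refine pi_norm_le_iff_of_nonneg hnn |>.2 fun p => ?_
    have h1 : ‖g' s p‖ ≤ Real.exp s * ∑ k : Fin N, w k * ‖z (p.1.1 + k) s - z (p.1.2 + k) s‖ := by
      rw [hg', norm_smul, Real.norm_eq_abs, abs_of_pos (Real.exp_pos s)]
      gcongr
      refine (norm_sum_le _ _).trans ?_
      refine Finset.sum_le_sum fun k _ => ?_
      rw [norm_smul, Real.norm_eq_abs, abs_of_nonneg (hw k)]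
    calc ‖g' s p‖ ≤ Real.exp s * ∑ k : Fin N, w k * ‖z (p.1.1 + k) s - z (p.1.2 + k) s‖ := h1
      _ = ∑ k : Fin N, w k * ‖g s (σ p k)‖ := by
          rw [Finset.mul_sum]
          refine Finset.sum_congr rfl fun k _ => ?_
          rw [hg, hσ]
          simp only [norm_smul, Real.norm_eq_abs, abs_of_pos (Real.exp_pos s)]
          ring
      _ ≤ ∑ k : Fin N, w k * ‖g s‖ := by
          refine Finset.sum_le_sum fun k _ => ?_
          exact mul_le_mul_of_nonneg_left (norm_le_pi_norm _ _) (hw k)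
      _ = ‖g s‖ := by rw [← Finset.sum_mul, hsum, one_mul]
  have hinit' : ‖g 0‖ ≤ C := by
    refine pi_norm_le_iff_of_nonneg hC.le |>.2 fun p => ?_
    simp only [hg, Real.exp_zero, one_smul]
    exact hinit p.1.1 p.1.2 p.2
  have hgron := norm_le_gronwallBound_of_norm_deriv_right_le hgcont
    (fun s hs => (hderiv s).hasDerivWithinAt) hinit' hbound t (Set.right_mem_Icc.2 ht)
  rw [gronwallBound_ε0, sub_zero, one_mul] at hgron
  have hp : ‖g t ⟨(i, j), hij⟩‖ ≤ C * Real.exp t := (norm_le_pi_norm _ _).trans hgron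
  rw [hg] at hp
  simp only [norm_smul, Real.norm_eq_abs, abs_of_pos (Real.exp_pos t)] at hp
  have := (mul_le_mul_iff_right₀ (Real.exp_pos t)).1 (by linarith [hp] : Real.exp t * ‖z i t - z j t‖ ≤ Real.exp t * C)
  linarith
end

section
/- Under the circulant dynamics ż_i = -z_i + ∑_j w_j z_{i+j} with nonnegative consistent weights, the function t ↦ max over communicating pairs (j,i) of ‖z_i(t) - z_j(t)‖ is non-increasing. Specifically, if (j,i) attains the maximum at time t, then (d/dt)‖z_i - z_j‖² ≤ 2‖z_i - z_j‖²(-1 + ∑_k w_k) ≤ 0. -/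
set_option maxHeartbeats 1000000

open Filter Set
open scoped RealInnerProductSpace Topology

private lemma aux_sq_le_sq {a b : ℝ} (ha : 0 ≤ a) (hb : 0 ≤ b) (h : a ^ 2 ≤ b ^ 2) : a ≤ b := by
  nlinarith

theorem stmt_14 (N : ℕ) (hN : 1 ≤ N)
    (w : Fin N → ℝ) (hw : ∀ j, 0 ≤ w j) (hsum : ∑ k, w k = 1)
    (z : Fin N → ℝ → EuclideanSpace ℝ (Fin 2))
    (hode : ∀ i t, HasDerivAt (z i) (-(z i t) + ∑ j : Fin N, w j • z (i + j) t) t)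
    (E : Finset (Fin N × Fin N)) (hE : ∀ p : Fin N × Fin N, p ∈ E ↔ w (p.1 - p.2) ≠ 0)
    (hEne : E.Nonempty) :
    Antitone (fun t => E.sup' hEne (fun p => ‖z p.2 t - z p.1 t‖)) ∧
    ∀ (t : ℝ) (i j : Fin N), w (j - i) ≠ 0 →
      (∀ k l : Fin N, w (l - k) ≠ 0 → ‖z l t - z k t‖ ≤ ‖z i t - z j t‖) →
      ∀ d : ℝ, HasDerivAt (fun s => ‖z i s - z j s‖ ^ 2) d t →
        d ≤ 2 * ‖z i t - z j t‖ ^ 2 * (-1 + ∑ k, w k) ∧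
        2 * ‖z i t - z j t‖ ^ 2 * (-1 + ∑ k, w k) ≤ 0 := by
  haveI : NeZero N := ⟨by omega⟩
  -- key lemma
  have key : ∀ (t : ℝ) (i j : Fin N), w (j - i) ≠ 0 →
      (∀ k l : Fin N, w (l - k) ≠ 0 → ‖z l t - z k t‖ ≤ ‖z i t - z j t‖) →
      ∃ D : ℝ, HasDerivAt (fun s => ‖z i s - z j s‖ ^ 2) D t ∧ D ≤ 0 := by
    intro t i j hij hmax
    have hu : HasDerivAt (fun s => z i s - z j s)
        ((-(z i t) + ∑ m : Fin N, w m • z (i + m) t)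
          - (-(z j t) + ∑ m : Fin N, w m • z (j + m) t)) t := (hode i t).sub (hode j t)
    set u : EuclideanSpace ℝ (Fin 2) := z i t - z j t with hudef
    set V : EuclideanSpace ℝ (Fin 2) :=
      (-(z i t) + ∑ m : Fin N, w m • z (i + m) t)
        - (-(z j t) + ∑ m : Fin N, w m • z (j + m) t) with hV
    refine ⟨2 * (inner ℝ (u) (V) : ℝ), ?_, ?_⟩
    · have h2 : HasDerivAt (fun s => (inner ℝ (z i s - z j s) (z i s - z j s) : ℝ))
          ((inner ℝ (u) (V) : ℝ) + (inner ℝ (V) (u) : ℝ)) t := hu.inner ℝ hu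
      have h3 : HasDerivAt (fun s => (inner ℝ (z i s - z j s) (z i s - z j s) : ℝ)) (2 * (inner ℝ (u) (V) : ℝ)) t := by
        convert h2 using 1
        rw [real_inner_comm V u]; ring
      have h4 : (fun s => (inner ℝ (z i s - z j s) (z i s - z j s) : ℝ))
          = fun s => ‖z i s - z j s‖ ^ 2 := by
        funext s; exact real_inner_self_eq_norm_sq _
      rwa [h4] at h3
    · -- bound the derivative
      have hVeq : V = -u + ∑ m : Fin N, w m • (z (i + m) t - z (j + m) t) := by
        rw [hV, hudef]
        simp only [smul_sub, Finset.sum_sub_distrib]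
        abel
      have hinner : (inner ℝ (u) (V) : ℝ)
          = -(inner ℝ (u) (u) : ℝ) + ∑ m : Fin N, w m * (inner ℝ (u) (z (i + m) t - z (j + m) t) : ℝ) := by
        rw [hVeq, inner_add_right, inner_neg_right, inner_sum]
        simp only [real_inner_smul_right]
      have hterm : ∀ m : Fin N,
          w m * (inner ℝ (u) (z (i + m) t - z (j + m) t) : ℝ) ≤ w m * (‖u‖ * ‖u‖) := by
        intro m
        apply mul_le_mul_of_nonneg_left _ (hw m)
        have hcomm : w ((j + m) - (i + m)) ≠ 0 := by
          rwa [add_sub_add_right_eq_sub]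
        have hle : ‖z (j + m) t - z (i + m) t‖ ≤ ‖u‖ := hmax (i + m) (j + m) hcomm
        calc (inner ℝ (u) (z (i + m) t - z (j + m) t) : ℝ)
            ≤ ‖u‖ * ‖z (i + m) t - z (j + m) t‖ := real_inner_le_norm _ _
          _ ≤ ‖u‖ * ‖u‖ := by
              apply mul_le_mul_of_nonneg_left _ (norm_nonneg u)
              rwa [norm_sub_rev]
      have hsumle : ∑ m : Fin N, w m * (inner ℝ (u) (z (i + m) t - z (j + m) t) : ℝ) ≤ ‖u‖ * ‖u‖ := by
        calc ∑ m : Fin N, w m * (inner ℝ (u) (z (i + m) t - z (j + m) t) : ℝ)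
            ≤ ∑ m : Fin N, w m * (‖u‖ * ‖u‖) := Finset.sum_le_sum fun m _ => hterm m
          _ = (∑ m : Fin N, w m) * (‖u‖ * ‖u‖) := by rw [Finset.sum_mul]
          _ = ‖u‖ * ‖u‖ := by rw [hsum, one_mul]
      have huu : (inner ℝ (u) (u) : ℝ) = ‖u‖ * ‖u‖ := real_inner_self_eq_norm_mul_norm u
      nlinarith [hinner, hsumle, huu]
  -- notation for the squared-norm functions
  set g : Fin N × Fin N → ℝ → ℝ := fun p s => ‖z p.2 s - z p.1 s‖ ^ 2 with hgdef
  have hzc : ∀ i, Continuous (z i) :=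
    fun i => continuous_iff_continuousAt.2 fun t => (hode i t).continuousAt
  have hgc : ∀ p, Continuous (g p) := fun p => (((hzc p.2).sub (hzc p.1)).norm).pow 2
  set G : ℝ → ℝ := fun s => E.sup' hEne fun p => g p s with hGdef
  have hGc : Continuous G := Continuous.finset_sup'_apply hEne fun p _ => hgc p
  -- slope bound
  have freq : ∀ x : ℝ, ∀ r : ℝ, 0 < r → ∃ᶠ y in 𝓝[>] x, slope G x y < r := by
    intro x r hr
    by_contra hcon
    rw [Filter.not_frequently] at hcon
    have hex : ∀ᶠ y in 𝓝[>] x, ∃ p ∈ E, G y = g p y :=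
      Filter.Eventually.of_forall fun y => by
        obtain ⟨p, hp, hpe⟩ := Finset.exists_mem_eq_sup' hEne (fun p => g p y)
        exact ⟨p, hp, hpe⟩
    have hpig : ∃ p ∈ E, ∃ᶠ y in 𝓝[>] x, (G y = g p y ∧ r ≤ slope G x y) := by
      by_contra hno
      push_neg at hno
      have hall : ∀ᶠ y in 𝓝[>] x, ∀ p ∈ E, ¬(G y = g p y ∧ r ≤ slope G x y) := by
        rw [Filter.eventually_all_finset]
        intro p hp
        exact (hno p hp).mono fun y hy h => absurd (hy h.1) (not_lt.mpr h.2)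
      obtain ⟨y, h1, h2, p, hp, heq⟩ := (hall.and (hcon.and hex)).exists
      exact h1 p hp ⟨heq, not_lt.mp h2⟩
    obtain ⟨p, hpE, hfreq⟩ := hpig
    have hGt : Tendsto G (𝓝[>] x) (𝓝 (G x)) := (hGc.tendsto x).mono_left nhdsWithin_le_nhds
    have hgt : Tendsto (g p) (𝓝[>] x) (𝓝 (g p x)) :=
      ((hgc p).tendsto x).mono_left nhdsWithin_le_nhds
    have hgx : G x = g p x :=
      tendsto_nhds_unique_of_frequently_eq hGt hgt (hfreq.mono fun y h => h.1)
    have hji : w (p.1 - p.2) ≠ 0 := (hE p).1 hpE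
    have hmax : ∀ k l : Fin N, w (l - k) ≠ 0 → ‖z l x - z k x‖ ≤ ‖z p.2 x - z p.1 x‖ := by
      intro k l hkl
      have hq : (l, k) ∈ E := (hE (l, k)).2 hkl
      have h1 : g (l, k) x ≤ G x := Finset.le_sup' (fun p => g p x) hq
      rw [hgx] at h1
      refine aux_sq_le_sq (norm_nonneg _) (norm_nonneg _) ?_
      rw [norm_sub_rev]
      exact h1
    obtain ⟨D, hD, hD0⟩ := key x p.2 p.1 hji hmax
    have hDg : HasDerivAt (g p) D x := hD
    have hslope : Tendsto (slope (g p) x) (𝓝[>] x) (𝓝 D) :=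
      (hasDerivAt_iff_tendsto_slope.1 hDg).mono_left
        (nhdsWithin_mono x fun y hy => (hy : x < y).ne')
    have hev : ∀ᶠ y in 𝓝[>] x, slope (g p) x y < r :=
      hslope.eventually_lt_const (hD0.trans_lt hr)
    obtain ⟨y, ⟨hy1, hy2⟩, hy3⟩ := (hfreq.and_eventually hev).exists
    have : slope G x y = slope (g p) x y := by
      simp only [slope_def_field, hy1, hgx]
    rw [this] at hy2
    exact absurd hy3 (not_lt.mpr hy2)
  constructor
  · -- Antitone
    intro a b hab
    have hGanti : G b ≤ G a := by
      have hmain := image_le_of_liminf_slope_right_le_deriv_boundary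
        (f := G) (a := a) (b := b) (B := fun _ => G a) (B' := fun _ => 0)
        hGc.continuousOn le_rfl continuousOn_const
        (fun x _ => hasDerivWithinAt_const x _ (G a))
        (fun x _ r hr => freq x r hr)
      exact hmain ⟨hab, le_rfl⟩
    show (E.sup' hEne fun p => ‖z p.2 b - z p.1 b‖) ≤ E.sup' hEne fun p => ‖z p.2 a - z p.1 a‖
    apply Finset.sup'_le
    intro p hp
    obtain ⟨q, hq, hq2⟩ := Finset.exists_mem_eq_sup' hEne (fun p => g p a)
    have hb : g p b ≤ g q a := by
      calc g p b ≤ G b := Finset.le_sup' (fun p => g p b) hp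
        _ ≤ G a := hGanti
        _ = g q a := hq2
    have h2 : ‖z p.2 b - z p.1 b‖ ^ 2 ≤ ‖z q.2 a - z q.1 a‖ ^ 2 := by
      simpa only [hgdef] using hb
    have h3 : ‖z p.2 b - z p.1 b‖ ≤ ‖z q.2 a - z q.1 a‖ :=
      aux_sq_le_sq (norm_nonneg (z p.2 b - z p.1 b)) (norm_nonneg (z q.2 a - z q.1 a)) h2
    have h4 := Finset.le_sup' (fun p : Fin N × Fin N => ‖z p.2 a - z p.1 a‖) hq
    exact h3.trans h4
  · -- pointwise derivative bound
    intro t i j hij hmax d hd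
    obtain ⟨D, hD, hD0⟩ := key t i j hij hmax
    have hde : d = D := hd.unique hD
    have hR : 2 * ‖z i t - z j t‖ ^ 2 * (-1 + ∑ k, w k) = 0 := by rw [hsum]; ring
    rw [hR, hde]
    exact ⟨hD0, le_rfl⟩
end
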